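/- Let $E\subset\mathbb{R}^n$ be weakly porous with constants $0<c,\delta<1$. If $Q\subset R$ are cubes such that $E\cap Q\neq\emptyset$ and $|\mathcal{M}(Q)|<4^{-n}\delta|\mathcal{M}(R)|$, then $|Q|\le(1-2^{-n}c)|R|$. -/

import Mathlib

open MeasureTheory Metric Set

noncomputable section

/-- An axis-parallel half-open cube in `ℝⁿ`, given by its lower corner and side length. -/
structure Cube (n : ℕ) where
  a : EuclideanSpace ℝ (Fin n)
  l : ℝ
  pos : 0 < l

/-- The set of points of a cube. -/
def Cube.set {n : ℕ} (P : Cube n) : Set (EuclideanSpace ℝ (Fin n)) :=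
  {x | ∀ i, P.a i ≤ x i ∧ x i < P.a i + P.l}

/-- A weight: locally integrable and a.e. positive. -/
def IsWeight {n : ℕ} (w : EuclideanSpace ℝ (Fin n) → ℝ) : Prop :=
  LocallyIntegrable w volume ∧ ∀ᵐ x ∂(volume : Measure (EuclideanSpace ℝ (Fin n))), 0 < w x

/-- The `A₁` inequality with constant `C`, over all axis-parallel cubes. -/
def A1With {n : ℕ} (w : EuclideanSpace ℝ (Fin n) → ℝ) (C : ℝ) : Prop :=
  ∀ P : Cube n, (⨍ x in P.set, w x) ≤ C * essInf w (volume.restrict P.set)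

/-- Membership in the Muckenhoupt class `A₁`. -/
def MemA1 {n : ℕ} (w : EuclideanSpace ℝ (Fin n) → ℝ) : Prop :=
  IsWeight w ∧ ∃ C : ℝ, A1With w C

/-- The `A_p` inequality with constant `C`, over all axis-parallel cubes. -/
def ApWith {n : ℕ} (w : EuclideanSpace ℝ (Fin n) → ℝ) (p C : ℝ) : Prop :=
  ∀ P : Cube n,
    (⨍ x in P.set, w x) * (⨍ x in P.set, w x ^ (1 / (1 - p))) ^ (p - 1) ≤ C

/-- Membership in the Muckenhoupt class `A_p`. -/
def MemAp {n : ℕ} (w : EuclideanSpace ℝ (Fin n) → ℝ) (p : ℝ) : Prop :=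
  IsWeight w ∧ ∃ C : ℝ, ApWith w p C

/-- `Q` is a dyadic subcube of `P`. -/
def IsDyadicSubcube {n : ℕ} (P Q : Cube n) : Prop :=
  ∃ (j : ℕ) (k : Fin n → ℕ), (∀ i, k i < 2 ^ j) ∧
    Q.l = P.l / 2 ^ j ∧ ∀ i, Q.a i = P.a i + P.l * k i / 2 ^ j

/-- A cube is `E`-free if it does not meet `E`. -/
def EFree {n : ℕ} (E : Set (EuclideanSpace ℝ (Fin n))) (Q : Cube n) : Prop :=
  Q.set ∩ E = ∅

/-- The measure `|𝓜(P)|` of a largest `E`-free dyadic subcube of `P`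
(`0` if there is none). -/
def maxFree {n : ℕ} (E : Set (EuclideanSpace ℝ (Fin n))) (P : Cube n) : ℝ :=
  sSup {v : ℝ | ∃ Q : Cube n, IsDyadicSubcube P Q ∧ EFree E Q ∧ v = (volume Q.set).toReal}

/-- Weak porosity with constants `c`, `δ`. -/
def WeaklyPorousWith {n : ℕ} (E : Set (EuclideanSpace ℝ (Fin n))) (c δ : ℝ) : Prop :=
  ∀ P : Cube n, ∃ (N : ℕ) (Q : Fin N → Cube n),
    (∀ k, IsDyadicSubcube P (Q k) ∧ EFree E (Q k)) ∧
    (∀ k m, k ≠ m → Disjoint (Q k).set (Q m).set) ∧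
    (∀ k, δ * maxFree E P ≤ (volume (Q k).set).toReal) ∧
    c * (volume P.set).toReal ≤ ∑ k, (volume (Q k).set).toReal

/-- A set is weakly porous if it is weakly porous with some constants `0 < c, δ < 1`. -/
def WeaklyPorous {n : ℕ} (E : Set (EuclideanSpace ℝ (Fin n))) : Prop :=
  ∃ c δ : ℝ, 0 < c ∧ c < 1 ∧ 0 < δ ∧ δ < 1 ∧ WeaklyPorousWith E c δ

/-- Porosity. -/
def Porous {n : ℕ} (E : Set (EuclideanSpace ℝ (Fin n))) : Prop :=
  ∃ c : ℝ, 0 < c ∧ ∀ (x : EuclideanSpace ℝ (Fin n)) (r : ℝ), 0 < r →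
    ∃ y : EuclideanSpace ℝ (Fin n), ball y (c * r) ⊆ ball x r \ E

/-- The distance weight `dist(·,E)^{-α}`. -/
def distw {n : ℕ} (E : Set (EuclideanSpace ℝ (Fin n))) (α : ℝ)
    (x : EuclideanSpace ℝ (Fin n)) : ℝ :=
  infDist x E ^ (-α)

/-- `h_E(B(x,R))`: the supremum of radii `t` of balls contained in `B(x,R) \ E`. -/
def hFree {n : ℕ} (E : Set (EuclideanSpace ℝ (Fin n))) (x : EuclideanSpace ℝ (Fin n))
    (R : ℝ) : ℝ :=
  sSup {t : ℝ | ∃ y ∈ ball x R, ball y t ⊆ ball x R \ E}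

/-- The set of admissible exponents in the definition of the Muckenhoupt exponent. -/
def MuckSet {n : ℕ} (E : Set (EuclideanSpace ℝ (Fin n))) : Set ℝ :=
  {α : ℝ | ∃ C : ℝ, ∀ x ∈ E, ∀ R r : ℝ, 0 < r → r < hFree E x R → hFree E x R ≤ R →
    (volume (thickening r E ∩ ball x R)).toReal ≤
      C * (hFree E x R / r) ^ (-α) * (volume (ball x R)).toReal}

open scoped Classical in
/-- The Muckenhoupt exponent of `E`. -/
def MuckExp {n : ℕ} (E : Set (EuclideanSpace ℝ (Fin n))) : ℝ :=
  if ∀ x ∈ E, ∀ R : ℝ, 0 < R → 0 < hFree E x R then sSup (MuckSet E) else 0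

end

/-!
Apply weak porosity to `R`: it yields disjoint `E`-free dyadic subcubes `K` of `R` of total
measure at least `c|R|`, each with `|K| ≥ δ|𝓜(R)| > 4ⁿ|𝓜(Q)|`. Such a `K` overlaps `Q` by at
most half its side in some direction; otherwise a dyadic subcube of `Q` of side at least
`ℓ(K)/4` fits into `K ∩ Q`, and being `E`-free it would be larger than `𝓜(Q)`. So
`|K \ Q| ≥ |K|/2`, and since `Q` and the sets `K \ Q` are disjoint subsets of `R`,
`|Q| ≤ |R| - c|R|/2 ≤ (1 - 2⁻ⁿc)|R|`.
-/

variable {n : ℕ}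

def icoBox (a b : Fin n → ℝ) : Set (EuclideanSpace ℝ (Fin n)) :=
  {x | ∀ i, x i ∈ Ico (a i) (b i)}

lemma icoBox_eq_preimage (a b : Fin n → ℝ) :
    icoBox a b =
      (MeasurableEquiv.toLp 2 (Fin n → ℝ)).symm ⁻¹' univ.pi fun i => Ico (a i) (b i) := by
  ext x
  simp [icoBox, Set.mem_pi]

lemma measurableSet_icoBox (a b : Fin n → ℝ) : MeasurableSet (icoBox a b) := by
  rw [icoBox_eq_preimage]
  exact (MeasurableEquiv.toLp 2 _).symm.measurable (.univ_pi fun _ => measurableSet_Ico)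

lemma volume_icoBox (a b : Fin n → ℝ) :
    volume (icoBox a b) = ∏ i, ENNReal.ofReal (b i - a i) := by
  rw [icoBox_eq_preimage,
    (EuclideanSpace.volume_preserving_symm_measurableEquiv_toLp _).measure_preimage
      (MeasurableSet.univ_pi fun _ => measurableSet_Ico).nullMeasurableSet, volume_pi_pi]
  simp [Real.volume_Ico]

namespace Cube

lemma set_eq_icoBox (P : Cube n) : P.set = icoBox P.a (fun i => P.a i + P.l) := rfl

lemma measurableSet_set (P : Cube n) : MeasurableSet P.set :=
  measurableSet_icoBox _ _

lemma volume_set (P : Cube n) : volume P.set = ENNReal.ofReal (P.l ^ n) := by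
  simp [set_eq_icoBox, volume_icoBox, ENNReal.ofReal_pow P.pos.le]

lemma volume_set_ne_top (P : Cube n) : volume P.set ≠ ⊤ := by
  simp [volume_set]

lemma measureReal_set (P : Cube n) : volume.real P.set = P.l ^ n := by
  simp [measureReal_def, volume_set, P.pos.le]

def overlap (K Q : Cube n) (i : Fin n) : ℝ :=
  min (K.a i + K.l) (Q.a i + Q.l) - max (K.a i) (Q.a i)

lemma overlap_le_left (K Q : Cube n) (i : Fin n) : K.overlap Q i ≤ K.l := by
  unfold overlap
  linarith [le_max_left (K.a i) (Q.a i), min_le_left (K.a i + K.l) (Q.a i + Q.l)]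

lemma overlap_le_right (K Q : Cube n) (i : Fin n) : K.overlap Q i ≤ Q.l := by
  unfold overlap
  linarith [le_max_right (K.a i) (Q.a i), min_le_right (K.a i + K.l) (Q.a i + Q.l)]

lemma inter_set_eq_icoBox (K Q : Cube n) :
    K.set ∩ Q.set =
      icoBox (fun i => max (K.a i) (Q.a i)) (fun i => min (K.a i + K.l) (Q.a i + Q.l)) := by
  ext x
  simp only [mem_inter_iff, Cube.set, icoBox, mem_ofPred_eq, mem_Ico, max_le_iff, lt_min_iff,
    ← forall_and]
  exact forall_congr' fun i => by tauto

lemma measureReal_inter_set (K Q : Cube n) :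
    volume.real (K.set ∩ Q.set) = ∏ i, max (K.overlap Q i) 0 := by
  simp [measureReal_def, inter_set_eq_icoBox, volume_icoBox, ENNReal.toReal_prod,
    ENNReal.toReal_ofReal', overlap]

lemma measureReal_inter_le_half {K : Cube n} (Q : Cube n) {i : Fin n}
    (hi : K.overlap Q i ≤ K.l / 2) : volume.real (K.set ∩ Q.set) ≤ K.l ^ n / 2 := by
  have hn : n ≠ 0 := Fin.pos i |>.ne'
  rw [measureReal_inter_set, ← Finset.mul_prod_erase _ _ (Finset.mem_univ i)]
  calc max (K.overlap Q i) 0 * ∏ j ∈ Finset.univ.erase i, max (K.overlap Q j) 0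
      ≤ K.l / 2 * ∏ j ∈ Finset.univ.erase i, K.l := by
        gcongr with j
        · linarith [K.pos]
        · exact max_le hi (by linarith [K.pos])
        · exact max_le (K.overlap_le_left Q j) K.pos.le
    _ = K.l ^ n / 2 := by
        rw [Finset.prod_const, Finset.card_erase_of_mem (Finset.mem_univ i), Finset.card_univ,
          Fintype.card_fin, div_mul_eq_mul_div, mul_pow_sub_one hn]

end Cube

lemma IsDyadicSubcube.set_subset {P D : Cube n} (h : IsDyadicSubcube P D) : D.set ⊆ P.set := by
  obtain ⟨j, k, hk, hl, ha⟩ := h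
  have h2j : (0 : ℝ) < 2 ^ j := by positivity
  intro x hx i
  have hk' : (k i : ℝ) + 1 ≤ 2 ^ j := by exact_mod_cast hk i
  have hcell : P.l * k i / 2 ^ j + P.l / 2 ^ j ≤ P.l := by
    rw [← add_div, div_le_iff₀ h2j]
    nlinarith [P.pos]
  obtain ⟨hlo, hhi⟩ := hx i
  rw [ha i] at hlo hhi
  rw [hl] at hhi
  constructor
  · have : 0 ≤ P.l * k i / 2 ^ j := by have := P.pos; positivity
    linarith
  · linarith

lemma le_maxFree {E : Set (EuclideanSpace ℝ (Fin n))} {P D : Cube n}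
    (hD : IsDyadicSubcube P D) (hfree : EFree E D) : volume.real D.set ≤ maxFree E P := by
  refine le_csSup ⟨volume.real P.set, ?_⟩ ⟨D, hD, hfree, rfl⟩
  rintro _ ⟨D', hD', -, rfl⟩
  exact measureReal_mono hD'.set_subset P.volume_set_ne_top

lemma maxFree_eq_zero_of_dim_zero {E : Set (EuclideanSpace ℝ (Fin 0))} (hE : E.Nonempty)
    (P : Cube 0) : maxFree E P = 0 := by
  rw [maxFree, ← Real.sSup_empty]
  congr 1
  refine eq_empty_of_forall_notMem ?_
  rintro _ ⟨D, -, hfree, -⟩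
  have hD : D.set = univ := eq_univ_of_forall fun _ i => i.elim0
  rw [EFree, hD, univ_inter] at hfree
  exact hE.ne_empty hfree

lemma exists_nat_cell_subset {a b h ℓ : ℝ} {m : ℕ} (hh : 0 < h) (hℓ : 2 * h ≤ ℓ)
    (hov : h ≤ min (b + ℓ) (a + m * h) - max b a) :
    ∃ k < m, b ≤ a + k * h ∧ a + k * h + h ≤ b + ℓ := by
  have hbm : b + h ≤ a + m * h := by
    linarith [le_max_left b a, min_le_right (b + ℓ) (a + m * h)]
  have ha : a + h ≤ b + ℓ := by linarith [le_max_right b a, min_le_left (b + ℓ) (a + m * h)]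
  have hm : 1 ≤ m := by
    have : 1 * h ≤ m * h := by linarith [le_max_right b a, min_le_right (b + ℓ) (a + m * h)]
    exact_mod_cast le_of_mul_le_mul_right this hh
  refine ⟨⌈(b - a) / h⌉₊, ?_, ?_, ?_⟩
  · have : ⌈(b - a) / h⌉₊ ≤ m - 1 := by
      rw [Nat.ceil_le, Nat.cast_sub hm, div_le_iff₀ hh]
      push_cast
      linarith
    omega
  · have := Nat.le_ceil ((b - a) / h)
    rw [div_le_iff₀ hh] at this
    linarith
  · rcases le_or_gt b a with hba | hab
    · rw [Nat.ceil_eq_zero.mpr (div_nonpos_of_nonpos_of_nonneg (by linarith) hh.le)]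
      simpa using ha
    · have := Nat.ceil_lt_add_one (div_pos (sub_pos.mpr hab) hh).le
      have : (⌈(b - a) / h⌉₊ : ℝ) * h < b - a + h := by
        calc _ < ((b - a) / h + 1) * h := by gcongr
          _ = b - a + h := by field_simp
      linarith

lemma exists_half_le_div_two_pow_le {t L : ℝ} (ht : 0 < t) (htL : t ≤ L) :
    ∃ j : ℕ, t / 2 ≤ L / 2 ^ j ∧ L / 2 ^ j ≤ t := by
  obtain ⟨j, hlo, hhi⟩ := exists_nat_pow_near ((one_le_div ht).mpr htL) one_lt_two
  refine ⟨j + 1, ?_, ?_⟩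
  · rw [le_div_iff₀ (by positivity), pow_succ]
    rw [le_div_iff₀ ht] at hlo
    linarith
  · rw [div_le_iff₀ (by positivity)]
    rw [div_lt_iff₀ ht] at hhi
    linarith

lemma exists_dyadicSubcube_subset_of_half_le_overlap (hn : 0 < n) {K Q : Cube n}
    (hov : ∀ i, K.l / 2 ≤ K.overlap Q i) :
    ∃ D, IsDyadicSubcube Q D ∧ D.set ⊆ K.set ∧ K.l / 4 ≤ D.l := by
  have hKQ : K.l / 2 ≤ Q.l := (hov ⟨0, hn⟩).trans (K.overlap_le_right Q _)
  obtain ⟨j, hjlo, hjhi⟩ := exists_half_le_div_two_pow_le (half_pos K.pos) hKQ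
  set h := Q.l / 2 ^ j
  have hh : 0 < h := by have := Q.pos; positivity
  have hQl : Q.l = ((2 ^ j : ℕ) : ℝ) * h := by simp only [h]; push_cast; field_simp
  choose k hkm hk using fun i =>
    exists_nat_cell_subset (a := Q.a i) (b := K.a i) (ℓ := K.l) (m := 2 ^ j) hh (by linarith)
      (by rw [← hQl]; exact hjhi.trans (hov i))
  refine ⟨⟨WithLp.toLp 2 fun i => Q.a i + k i * h, h, hh⟩,
    ⟨j, k, hkm, rfl, fun i => by simp only [h]; ring⟩, fun x hx i => ?_, by linarith⟩
  obtain ⟨hxlo, hxhi⟩ := hx i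
  exact ⟨(hk i).1.trans hxlo, hxhi.trans_le (hk i).2⟩

lemma half_le_measureReal_sdiff_of_maxFree_lt (hn : 0 < n)
    {E : Set (EuclideanSpace ℝ (Fin n))} {K Q : Cube n} (hK : EFree E K)
    (hQ : maxFree E Q < volume.real K.set / 4 ^ n) :
    volume.real K.set / 2 ≤ volume.real (K.set \ Q.set) := by
  rw [K.measureReal_set] at hQ ⊢
  have hinter : volume.real (K.set ∩ Q.set) ≤ K.l ^ n / 2 := by
    by_cases hov : ∀ i, K.l / 2 ≤ K.overlap Q i
    · exfalso
      obtain ⟨D, hD, hDK, hDl⟩ := exists_dyadicSubcube_subset_of_half_le_overlap hn hov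
      have hDfree : EFree E D := subset_empty_iff.mp (hK ▸ inter_subset_inter_left E hDK)
      have := le_maxFree hD hDfree
      rw [← div_pow] at hQ
      rw [D.measureReal_set] at this
      have : (K.l / 4) ^ n ≤ D.l ^ n := pow_le_pow_left₀ (by linarith [K.pos]) hDl n
      linarith
    · push Not at hov
      obtain ⟨i, hi⟩ := hov
      exact Cube.measureReal_inter_le_half Q hi.le
  have hsplit := measureReal_inter_add_sdiff (s := K.set) Q.measurableSet_set K.volume_set_ne_top
  rw [K.measureReal_set] at hsplit
  linarith

lemma measureReal_add_sum_sdiff_le {α ι : Type*} [MeasurableSpace α] [Fintype ι]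
    {μ : Measure α} {s t : Set α} {f : ι → Set α} (hs : MeasurableSet s)
    (hf : ∀ k, MeasurableSet (f k)) (hdisj : Pairwise fun k m => Disjoint (f k) (f m))
    (hst : s ⊆ t) (hft : ∀ k, f k ⊆ t) (ht : μ t ≠ ⊤) :
    μ.real s + ∑ k, μ.real (f k \ s) ≤ μ.real t := by
  have hfin : ∀ u ⊆ t, μ u ≠ ⊤ := fun u hu => measure_ne_top_of_subset hu ht
  have hunion : s ∪ ⋃ k, f k \ s ⊆ t :=
    union_subset hst (iUnion_subset fun k => sdiff_subset.trans (hft k))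
  calc μ.real s + ∑ k, μ.real (f k \ s)
      = μ.real s + μ.real (⋃ k, f k \ s) := by
        rw [measureReal_iUnion_fintype (fun k m hkm => (hdisj hkm).mono sdiff_subset sdiff_subset)
          (fun k => (hf k).diff hs) (fun k => hfin _ (sdiff_subset.trans (hft k)))]
    _ = μ.real (s ∪ ⋃ k, f k \ s) :=
        (measureReal_union (disjoint_iUnion_right.mpr fun _ => disjoint_sdiff_right)
          (.iUnion fun k => (hf k).diff hs) (hfin _ hst)
          (hfin _ (subset_union_right.trans hunion))).symm
    _ ≤ μ.real t := measureReal_mono hunion ht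

theorem weaklyPorous_measure_drop_general {n : ℕ} (E : Set (EuclideanSpace ℝ (Fin n)))
    (c δ : ℝ) (hc0 : 0 < c)
    (hwp : WeaklyPorousWith E c δ) (Q R : Cube n) (hQR : Q.set ⊆ R.set)
    (hmeet : (E ∩ Q.set).Nonempty)
    (hM : maxFree E Q < δ * maxFree E R / 4 ^ n) :
    (volume Q.set).toReal ≤ (1 - c / 2 ^ n) * (volume R.set).toReal := by
  rcases Nat.eq_zero_or_pos n with rfl | hn
  · have hE : E.Nonempty := hmeet.mono inter_subset_left
    simp [maxFree_eq_zero_of_dim_zero hE] at hM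
  obtain ⟨N, K, hK, hdisj, hbig, hsum⟩ := hwp R
  simp only [← measureReal_def] at hbig hsum ⊢
  have hhalf (k : Fin N) : volume.real (K k).set / 2 ≤ volume.real ((K k).set \ Q.set) :=
    half_le_measureReal_sdiff_of_maxFree_lt hn (hK k).2 (hM.trans_le (by gcongr; exact hbig k))
  have hpack : volume.real Q.set + ∑ k, volume.real ((K k).set \ Q.set) ≤ volume.real R.set :=
    measureReal_add_sum_sdiff_le Q.measurableSet_set (fun k => (K k).measurableSet_set)
      (fun k m hkm => hdisj k m hkm) hQR (fun k => (hK k).1.set_subset) R.volume_set_ne_top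
  have h2n : (2 : ℝ) ≤ 2 ^ n := le_self_pow₀ one_le_two hn.ne'
  calc volume.real Q.set ≤ volume.real R.set - c * volume.real R.set / 2 := by
        have := Finset.sum_le_sum fun k (_ : k ∈ Finset.univ) => hhalf k
        rw [← Finset.sum_div] at this
        linarith
    _ ≤ volume.real R.set - c * volume.real R.set / 2 ^ n := by gcongr
    _ = (1 - c / 2 ^ n) * volume.real R.set := by ring

/-- If `E` is weakly porous with constants `c, δ`, `Q ⊆ R` are cubes,
`E ∩ Q ≠ ∅` and `|𝓜(Q)| < 4^{-n} δ |𝓜(R)|`, then `|Q| ≤ (1 - 2^{-n} c) |R|`. -/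
theorem weaklyPorous_measure_drop {n : ℕ} (E : Set (EuclideanSpace ℝ (Fin n)))
    (c δ : ℝ) (hc0 : 0 < c) (hc1 : c < 1) (hδ0 : 0 < δ) (hδ1 : δ < 1)
    (hwp : WeaklyPorousWith E c δ) (Q R : Cube n) (hQR : Q.set ⊆ R.set)
    (hmeet : (E ∩ Q.set).Nonempty)
    (hM : maxFree E Q < δ * maxFree E R / 4 ^ n) :
    (volume Q.set).toReal ≤ (1 - c / 2 ^ n) * (volume R.set).toReal :=
  weaklyPorous_measure_drop_general E c δ hc0 hwp Q R hQR hmeet hM
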